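/- Let Γ be a finite dismantlable graph with vertex set V, and let σ ∈ V be a vertex that is dominated in Γ. Then the subgraph of Γ induced on V ∖ {σ} is dismantlable. -/

import Mathlib

open SimpleGraph

variable {V : Type*}

/-- The closed neighbourhood of a vertex: the vertex together with all its neighbours. -/
def closedNbhd (G : SimpleGraph V) (ρ : V) : Set V := insert ρ {w | G.Adj ρ w}

/-- `ρ` is dominated by `π` within the subgraph of `G` induced on `S`:
`π ∈ S`, `π ≠ ρ`, and `N(ρ) ∩ S ⊆ N(π)`. -/
def DominatedIn (G : SimpleGraph V) (S : Set V) (ρ π : V) : Prop :=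
  π ∈ S ∧ π ≠ ρ ∧ ∀ w ∈ S, w ∈ closedNbhd G ρ → w ∈ closedNbhd G π

/-- The subgraph of `G` induced on `S` is dismantlable: the vertices of `S` can be
arranged in a (finite) list such that each vertex except the last is dominated in the
subgraph induced on it and the later vertices. -/
def DismantlableOn (G : SimpleGraph V) (S : Set V) : Prop :=
  ∃ l : List V, l.Nodup ∧ (∀ v, v ∈ l ↔ v ∈ S) ∧
    ∀ (i : ℕ) (h : i < l.length), i < l.length - 1 →
      ∃ π, DominatedIn G {w | w ∈ l.drop i} (l[i]'h) π

/-- A graph is dismantlable if the subgraph induced on all of its vertices is. -/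
def Dismantlable (G : SimpleGraph V) : Prop := DismantlableOn G Set.univ

/-- The set `Π*(ρ)` of all vertices appearing in pairs of `Π ρ`. -/
def PiStar (Pr : V → Finset (Sym2 V)) (ρ : V) : Set V := {v | ∃ p ∈ Pr ρ, v ∈ p}

/-- `Pr` is a `σ`-projection: it assigns to each vertex `ρ ≠ σ` a nonempty finite set of
unordered pairs of vertices such that (i) every finite set `R` containing a vertex other
than `σ` has an exposed vertex, and (ii) there is no cycle `ρ₀, …, ρ_{m-1}` with
`ρ_{i+1} ∈ Π*(ρ_i)` (indices mod `m`). -/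
structure IsSigmaProjection (G : SimpleGraph V) (σ : V) (Pr : V → Finset (Sym2 V)) : Prop where
  nonempty : ∀ ρ, ρ ≠ σ → (Pr ρ).Nonempty
  exposed : ∀ R : Finset V, (∃ ρ ∈ R, ρ ≠ σ) →
    ∃ ρ ∈ R, ρ ≠ σ ∧ ∃ p ∈ Pr ρ, ∀ π ∈ p,
      ∀ w ∈ R, w ∈ closedNbhd G ρ → w ∈ closedNbhd G π
  acyclic : ¬ ∃ m : ℕ, 0 < m ∧ ∃ f : ZMod m → V,
    ∀ i, f i ≠ σ ∧ f (i + 1) ∈ PiStar Pr (f i)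

/-- `R` is `Π`-convex: for every `ρ ∈ R` other than `σ`, each pair in `Π ρ` meets `R`. -/
def PiConvex (σ : V) (Pr : V → Finset (Sym2 V)) (R : Set V) : Prop :=
  ∀ ρ ∈ R, ρ ≠ σ → ∀ p ∈ Pr ρ, ∃ v ∈ p, v ∈ R

/-- The orbit `HR` of a set `R` under a group action. -/
def orbitSet (H : Type*) [Group H] [MulAction H V] (R : Set V) : Set V :=
  {x | ∃ h : H, ∃ ρ ∈ R, x = h • ρ}

/-- The geometric realization of the flag complex of `G` inside `ℝ^V`: the union over
all (nonempty) cliques of the convex hulls of the corresponding standard basis vectors. -/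
def flagRealization [DecidableEq V] (G : SimpleGraph V) : Set (V → ℝ) :=
  ⋃ (Δ : Set V) (_ : Δ.Nonempty) (_ : G.IsClique Δ),
    convexHull ℝ ((fun v => (Pi.single v 1 : V → ℝ)) '' Δ)

/-- A walk is a geodesic if its length equals the distance between its endpoints. -/
def IsGeodesic (G : SimpleGraph V) {u v : V} (p : G.Walk u v) : Prop :=
  p.length = G.dist u v

/-- `G` is `δ`-hyperbolic: for any geodesic triangle, each vertex on one side is within
distance `δ` of some vertex on the union of the other two sides. -/
def Hyperbolic (G : SimpleGraph V) (δ : ℕ) : Prop :=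
  ∀ (u v w : V) (p : G.Walk u v) (q : G.Walk v w) (r : G.Walk w u),
    IsGeodesic G p → IsGeodesic G q → IsGeodesic G r →
    ∀ t ∈ p.support, ∃ s, (s ∈ q.support ∨ s ∈ r.support) ∧ G.dist t s ≤ δ

/-- The Rips graph `Γ_D`: same vertices, two distinct vertices adjacent iff their
graph distance in `G` is at most `D`. -/
def ripsGraph (G : SimpleGraph V) (D : ℕ) : SimpleGraph V where
  Adj u v := u ≠ v ∧ G.dist u v ≤ D
  symm := by
    constructor
    intro u v h
    exact ⟨h.1.symm, by rw [SimpleGraph.dist_comm]; exact h.2⟩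
  loopless := by
    constructor
    intro v h
    exact h.1 rfl

/-- The ball of radius `r` around a set `C` of vertices. -/
def ballSet (G : SimpleGraph V) (C : Set V) (r : ℕ) : Set V :=
  {v | ∃ c ∈ C, G.dist v c ≤ r}

/-!
Induct along a dismantling order `v, …` of `S`. If `v = σ` the rest of the order dismantles
`S \ {σ}`. Otherwise, if `σ` has a dominator `π' ≠ v` in `S`, then `σ` stays dominated in
`S \ {v}`, so by induction `S \ {v, σ}` is dismantlable, and `v` is dominated in `S \ {σ}`
(by its old dominator, or by `π'` if that was `σ`), so `v` can be put back in front. If every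
dominator of `σ` is `v`, then `v` is dominated by `σ` alone (any other dominator of `v` would
dominate `σ`), so `σ` and `v` are twins in `S`: their transposition is an automorphism of the
subgraph induced on `S`, and it carries the dismantlable set `S \ {v}` onto `S \ {σ}`.
-/

namespace SimpleGraph

variable {W : Type*} {G : SimpleGraph V} {G' : SimpleGraph W} {S T : Set V} {ρ π τ v : V}

theorem mem_closedNbhd_comm {x w : V} : w ∈ closedNbhd G x ↔ x ∈ closedNbhd G w := by
  simp only [closedNbhd, Set.mem_insert_iff, Set.mem_ofPred_eq, G.adj_comm x w, eq_comm]

theorem DominatedIn.mono (h : DominatedIn G S ρ π) (hTS : T ⊆ S) (hπ : π ∈ T) :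
    DominatedIn G T ρ π :=
  ⟨hπ, h.2.1, fun w hw => h.2.2 w (hTS hw)⟩

theorem DominatedIn.trans (h₁ : DominatedIn G S ρ π) (h₂ : DominatedIn G S π τ)
    (hne : τ ≠ ρ) : DominatedIn G S ρ τ :=
  ⟨h₂.1, hne, fun w hw hρ => h₂.2.2 w hw (h₁.2.2 w hw hρ)⟩

theorem DominatedIn.image {f : V → W} (hf : Set.InjOn f T)
    (hN : ∀ x ∈ T, ∀ w ∈ T, f w ∈ closedNbhd G' (f x) ↔ w ∈ closedNbhd G x)
    (h : DominatedIn G T ρ π) (hρ : ρ ∈ T) : DominatedIn G' (f '' T) (f ρ) (f π) := by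
  refine ⟨Set.mem_image_of_mem f h.1, fun he => h.2.1 (hf h.1 hρ he), ?_⟩
  rintro _ ⟨w, hw, rfl⟩ hwρ
  exact (hN π h.1 w hw).2 (h.2.2 w hw ((hN ρ hρ w hw).1 hwρ))

theorem dismantlableOn_empty : DismantlableOn G ∅ :=
  ⟨[], List.nodup_nil, by simp, by simp⟩

theorem DismantlableOn.of_sdiff_singleton (hv : v ∈ S)
    (hdom : (S \ {v}).Nonempty → ∃ π, DominatedIn G S v π) (h : DismantlableOn G (S \ {v})) :
    DismantlableOn G S := by
  obtain ⟨l, hnd, hmem, hl⟩ := h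
  have hmem' : ∀ x, x ∈ v :: l ↔ x ∈ S := fun x => by
    by_cases hx : x = v
    · simp [hx, hv]
    · simp [hx, hmem]
  refine ⟨v :: l, List.nodup_cons.2 ⟨fun h => ((hmem v).1 h).2 rfl, hnd⟩, hmem', ?_⟩
  rintro (_ | i) hi hi'
  · have hne : (S \ {v}).Nonempty :=
      ⟨l[0]'(by simpa using hi'), (hmem _).1 (List.getElem_mem _)⟩
    rw [List.drop_zero, show {w | w ∈ v :: l} = S from Set.ext hmem']
    exact hdom hne
  · exact hl i (by simpa using hi) (by simp at hi'; omega)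

theorem DismantlableOn.induction_on {P : Set V → Prop} (hS : DismantlableOn G S) (empty : P ∅)
    (step : ∀ S v, v ∈ S → ((S \ {v}).Nonempty → ∃ π, DominatedIn G S v π) →
      DismantlableOn G (S \ {v}) → P (S \ {v}) → P S) : P S := by
  obtain ⟨l, hnd, hmem, hl⟩ := hS
  induction l generalizing S with
  | nil =>
    obtain rfl : S = ∅ := Set.eq_empty_of_forall_notMem fun x hx => by simpa using (hmem x).2 hx
    exact empty
  | cons v rest ih =>
    have hv : v ∈ S := (hmem v).1 List.mem_cons_self
    have hrest_mem : ∀ x, x ∈ rest ↔ x ∈ S \ {v} := fun x => by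
      rw [Set.mem_sdiff, Set.mem_singleton_iff, ← hmem, List.mem_cons]
      have := (List.nodup_cons.1 hnd).1
      constructor
      · exact fun hx => ⟨Or.inr hx, by rintro rfl; exact this hx⟩
      · exact fun ⟨hx, hxv⟩ => hx.resolve_left hxv
    have hrest : ∀ (i : ℕ) (h : i < rest.length), i < rest.length - 1 →
        ∃ π, DominatedIn G {w | w ∈ rest.drop i} (rest[i]'h) π := fun i h h' =>
      hl (i + 1) (by simpa using h) (by simp only [List.length_cons]; omega)
    refine step S v hv ?_ ⟨rest, hnd.of_cons, hrest_mem, hrest⟩ (ih hnd.of_cons hrest_mem hrest)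
    rintro ⟨w, hw⟩
    have hlen : 0 < rest.length := List.length_pos_of_mem ((hrest_mem w).2 hw)
    rw [← show {w | w ∈ v :: rest} = S from Set.ext hmem]
    exact hl 0 (by simp) (by simpa using hlen)

theorem DismantlableOn.image {f : V → W} (hf : Set.InjOn f S)
    (hN : ∀ x ∈ S, ∀ w ∈ S, f w ∈ closedNbhd G' (f x) ↔ w ∈ closedNbhd G x)
    (hS : DismantlableOn G S) : DismantlableOn G' (f '' S) := by
  refine hS.induction_on (P := fun T => T ⊆ S → DismantlableOn G' (f '' T))
    (fun _ => by simpa using dismantlableOn_empty) ?_ subset_rfl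
  intro T v hv hdom _ ih hTS
  have hfT : Set.InjOn f T := hf.mono hTS
  have himage : f '' T \ {f v} = f '' (T \ {v}) := by
    rw [hfT.image_sdiff_subset (Set.singleton_subset_iff.2 hv), Set.image_singleton]
  refine .of_sdiff_singleton (Set.mem_image_of_mem f hv) (fun hne => ?_) ?_
  · obtain ⟨π, hπ⟩ := hdom (by simpa [himage] using hne)
    exact ⟨f π, hπ.image hfT (fun x hx w hw => hN x (hTS hx) w (hTS hw)) hv⟩
  · rw [himage]
    exact ih (Set.sdiff_subset.trans hTS)

open Equiv in
theorem swap_mem_closedNbhd_swap_iff [DecidableEq V] {σ : V}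
    (htwin : ∀ u ∈ S, u ∈ closedNbhd G σ ↔ u ∈ closedNbhd G v) {x w : V} (hx : x ∈ S)
    (hw : w ∈ S) : swap σ v w ∈ closedNbhd G (swap σ v x) ↔ w ∈ closedNbhd G x := by
  have hself : ∀ y, y ∈ closedNbhd G y := fun y => Set.mem_insert y _
  have htwin' : ∀ u ∈ S, σ ∈ closedNbhd G u ↔ v ∈ closedNbhd G u := fun u hu => by
    simpa only [mem_closedNbhd_comm] using htwin u hu
  rcases eq_or_ne w σ with rfl | hwσ
  · rcases eq_or_ne x w with rfl | hxw
    · simp [hself]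
    rcases eq_or_ne x v with rfl | hxv
    · simp [mem_closedNbhd_comm]
    · simpa [swap_apply_of_ne_of_ne hxw hxv] using (htwin' x hx).symm
  rcases eq_or_ne w v with rfl | hwv
  · rcases eq_or_ne x w with rfl | hxw
    · simp [hself]
    rcases eq_or_ne x σ with rfl | hxσ
    · simp [mem_closedNbhd_comm]
    · simpa [swap_apply_of_ne_of_ne hxσ hxw] using htwin' x hx
  rw [swap_apply_of_ne_of_ne hwσ hwv]
  rcases eq_or_ne x σ with rfl | hxσ
  · simpa using (htwin w hw).symm
  rcases eq_or_ne x v with rfl | hxv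
  · simpa using htwin w hw
  · rw [swap_apply_of_ne_of_ne hxσ hxv]

theorem DismantlableOn.sdiff_singleton_of_twin {σ : V} (hS : DismantlableOn G (S \ {v}))
    (hσ : σ ∈ S) (hv : v ∈ S)
    (htwin : ∀ u ∈ S, u ∈ closedNbhd G σ ↔ u ∈ closedNbhd G v) :
    DismantlableOn G (S \ {σ}) := by
  classical
  rcases eq_or_ne σ v with rfl | hσv
  · exact hS
  have himage : Equiv.swap σ v '' (S \ {v}) = S \ {σ} := by
    rw [Equiv.image_swap_of_mem_of_notMem (s := S \ {v}) ⟨hσ, hσv⟩ (fun h => h.2 rfl),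
      Set.insert_sdiff_singleton, Set.insert_eq_of_mem hv]
  rw [← himage]
  exact hS.image (Equiv.injective _).injOn fun x hx w hw =>
    swap_mem_closedNbhd_swap_iff htwin (Set.sdiff_subset hx) (Set.sdiff_subset hw)

theorem DismantlableOn.sdiff_singleton_of_dominated {σ : V} (hS : DismantlableOn G S)
    (hσ : σ ∈ S) (hπ : DominatedIn G S σ π) : DismantlableOn G (S \ {σ}) := by
  revert σ π
  refine hS.induction_on (P := fun S => ∀ {σ π : V}, σ ∈ S → DominatedIn G S σ π →
    DismantlableOn G (S \ {σ})) (fun hσ => hσ.elim) ?_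
  intro S v hv hvdom hrest ih σ π hσ hπ
  rcases eq_or_ne v σ with rfl | hvσ
  · exact hrest
  have hσ' : σ ∈ S \ {v} := ⟨hσ, hvσ.symm⟩
  obtain ⟨π₀, hπ₀⟩ := hvdom ⟨σ, hσ'⟩
  by_cases hother : ∃ π', DominatedIn G S σ π' ∧ π' ≠ v
  · obtain ⟨π', hπ', hπ'v⟩ := hother
    have hv_dom : ∃ τ, DominatedIn G (S \ {σ}) v τ := by
      rcases eq_or_ne π₀ σ with rfl | hπ₀σ
      · exact ⟨π', (hπ₀.trans hπ' hπ'v).mono Set.sdiff_subset ⟨hπ'.1, hπ'.2.1⟩⟩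
      · exact ⟨π₀, hπ₀.mono Set.sdiff_subset ⟨hπ₀.1, hπ₀σ⟩⟩
    refine .of_sdiff_singleton ⟨hv, hvσ⟩ (fun _ => hv_dom) ?_
    rw [Set.sdiff_sdiff_comm]
    exact ih hσ' (hπ'.mono Set.sdiff_subset ⟨hπ'.1, hπ'v⟩)
  have hvπ : v = π := by_contra fun h => hother ⟨π, hπ, Ne.symm h⟩
  subst hvπ
  have hσπ₀ : σ = π₀ :=
    by_contra fun h => hother ⟨π₀, hπ.trans hπ₀ (Ne.symm h), hπ₀.2.1⟩
  subst hσπ₀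
  exact hrest.sdiff_singleton_of_twin hσ hv fun u hu =>
    ⟨hπ.2.2 u hu, hπ₀.2.2 u hu⟩

end SimpleGraph

theorem dismantlableOn_compl_of_dominated {V : Type*} (G : SimpleGraph V)
    (hG : Dismantlable G) (σ : V) (hσ : ∃ π, DominatedIn G Set.univ σ π) :
    DismantlableOn G {v | v ≠ σ} := by
  obtain ⟨π, hπ⟩ := hσ
  have h := hG.sdiff_singleton_of_dominated (Set.mem_univ σ) hπ
  rwa [← Set.compl_eq_univ_sdiff] at h
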